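/- arXiv:math/0508225 — 3 statements merged into one kernel-verified Lean document; each statement's English description precedes it below -/
import Mathlib

section
/- For the revisited rigid body system ẋ¹ = (a₂−a₃)x²x³ + a₂(a₁−a₂)x¹(x²)² + a₃(a₁−a₃)x¹(x³)², ẋ² = (a₃−a₁)x¹x³ + a₃(a₂−a₃)x²(x³)² + a₁(a₂−a₁)x²(x¹)², ẋ³ = (a₁−a₂)x¹x² + a₁(a₃−a₁)x³(x¹)² + a₂(a₃−a₂)x³(x²)², the vector field X decomposes as Xⁱ = Σⱼ Pⁱʲ ∂h₁/∂xʲ + Σⱼ gⁱʲ ∂h₂/∂xʲ, where P is the rigid-body Poisson tensor, h₁ = ½(a₁(x¹)²+a₂(x²)²+a₃(x³)²), h₂ = ½((x¹)²+(x²)²+(x³)²), and g is given by g¹¹ = −a₂²(x²)²−a₃²(x³)², g²² = −a₁²(x¹)²−a₃²(x³)², g³³ = −a₁²(x¹)²−a₂²(x²)², g¹² = g²¹ = a₁a₂x¹x², g¹³ = g³¹ = a₁a₃x¹x³, g²³ = g³² = a₂a₃x²x³. -/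

lemma fd3 (a b c : ℝ) (x v : Fin 3 → ℝ) :
    fderiv ℝ (fun y : Fin 3 → ℝ => 2⁻¹ * (a * (y 0)^2 + b * (y 1)^2 + c * (y 2)^2)) x v
      = (1/2) * (a * (2 * x 0 * v 0) + b * (2 * x 1 * v 1) + c * (2 * x 2 * v 2)) := by
  have h0 := hasFDerivAt_apply (𝕜 := ℝ) (0 : Fin 3) x
  have h1 := hasFDerivAt_apply (𝕜 := ℝ) (1 : Fin 3) x
  have h2 := hasFDerivAt_apply (𝕜 := ℝ) (2 : Fin 3) x
  have H := ((((h0.mul h0).const_mul a).add (((h1.mul h1).const_mul b).add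
      ((h2.mul h2).const_mul c))).const_mul ((1:ℝ)/2))
  simp only [Pi.mul_apply, Pi.add_apply] at H
  rw [show (fun y : Fin 3 → ℝ => 2⁻¹ * (a * (y 0)^2 + b * (y 1)^2 + c * (y 2)^2))
      = fun y : Fin 3 → ℝ => (1/2) * (a * (y 0 * y 0) + (b * (y 1 * y 1) + c * (y 2 * y 2))) by
      funext y; ring, H.fderiv]
  simp [ContinuousLinearMap.proj_apply]
  ring

lemma fd3' (x v : Fin 3 → ℝ) :
    fderiv ℝ (fun y : Fin 3 → ℝ => 2⁻¹ * ((y 0)^2 + (y 1)^2 + (y 2)^2)) x v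
      = x 0 * v 0 + x 1 * v 1 + x 2 * v 2 := by
  have h0 := hasFDerivAt_apply (𝕜 := ℝ) (0 : Fin 3) x
  have h1 := hasFDerivAt_apply (𝕜 := ℝ) (1 : Fin 3) x
  have h2 := hasFDerivAt_apply (𝕜 := ℝ) (2 : Fin 3) x
  have H := (((h0.mul h0).add ((h1.mul h1).add (h2.mul h2))).const_mul ((1:ℝ)/2))
  simp only [Pi.mul_apply, Pi.add_apply] at H
  rw [show (fun y : Fin 3 → ℝ => 2⁻¹ * ((y 0)^2 + (y 1)^2 + (y 2)^2))
      = fun y : Fin 3 → ℝ => (1/2) * ((y 0 * y 0) + ((y 1 * y 1) + (y 2 * y 2))) by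
      funext y; ring, H.fderiv]
  simp [ContinuousLinearMap.proj_apply]
  ring

/-- The revisted rigid body vector field
`X¹ = (a₂-a₃)x²x³ + a₂(a₁-a₂)x¹(x²)² + a₃(a₁-a₃)x¹(x³)²`,
`X² = (a₃-a₁)x¹x³ + a₃(a₂-a₃)x²(x³)² + a₁(a₂-a₁)x²(x¹)²`,
`X³ = (a₁-a₂)x¹x² + a₁(a₃-a₁)x³(x¹)² + a₂(a₃-a₂)x³(x²)²`
decomposes as `Xⁱ = ∑ⱼ Pⁱʲ ∂h₁/∂xʲ + gⁱʲ ∂h₂/∂xʲ`, with `P` the rigid-body Poisson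
tensor, `h₁ = ½(a₁(x¹)²+a₂(x²)²+a₃(x³)²)`, `h₂ = ½((x¹)²+(x²)²+(x³)²)` and `g` the
listed symmetric matrix. -/
theorem stmt9 (a₁ a₂ a₃ : ℝ) (x : Fin 3 → ℝ) :
    ∀ i : Fin 3,
      (![(a₂ - a₃) * x 1 * x 2 + a₂ * (a₁ - a₂) * x 0 * (x 1)^2
            + a₃ * (a₁ - a₃) * x 0 * (x 2)^2,
         (a₃ - a₁) * x 0 * x 2 + a₃ * (a₂ - a₃) * x 1 * (x 2)^2
            + a₁ * (a₂ - a₁) * x 1 * (x 0)^2,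
         (a₁ - a₂) * x 0 * x 1 + a₁ * (a₃ - a₁) * x 2 * (x 0)^2
            + a₂ * (a₃ - a₂) * x 2 * (x 1)^2] : Fin 3 → ℝ) i
      = ∑ j : Fin 3,
          ((!![0, x 2, -(x 1); -(x 2), 0, x 0; x 1, -(x 0), 0]
              : Matrix (Fin 3) (Fin 3) ℝ) i j
            * fderiv ℝ (fun y : Fin 3 → ℝ =>
                (1/2) * (a₁ * (y 0)^2 + a₂ * (y 1)^2 + a₃ * (y 2)^2)) x (Pi.single j 1)
          + (!![-(a₂^2 * (x 1)^2) - a₃^2 * (x 2)^2, a₁ * a₂ * x 0 * x 1,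
                  a₁ * a₃ * x 0 * x 2;
                a₁ * a₂ * x 0 * x 1, -(a₁^2 * (x 0)^2) - a₃^2 * (x 2)^2,
                  a₂ * a₃ * x 1 * x 2;
                a₁ * a₃ * x 0 * x 2, a₂ * a₃ * x 1 * x 2,
                  -(a₁^2 * (x 0)^2) - a₂^2 * (x 1)^2] : Matrix (Fin 3) (Fin 3) ℝ) i j
            * fderiv ℝ (fun y : Fin 3 → ℝ =>
                (1/2) * ((y 0)^2 + (y 1)^2 + (y 2)^2)) x (Pi.single j 1)) := by
  intro i
  fin_cases i <;>
    · simp [Fin.sum_univ_three, Pi.single_apply]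
      simp [fd3, fd3', Pi.single_apply]
      ring
end

section
/- For constants a₁, a₂, a₃ (the rigid body with time delay in one direction, ẋ¹(t) = (a₂−a₃)x²(t−τ)x³(t), ẋ²(t) = (a₃−a₁)x¹(t)x³(t), ẋ³(t) = (a₁−a₂)x¹(t)x²(t−τ)), let X be the vector field on ℝ³×ℝ³, with coordinates (x̃, x), whose components X¹ = (a₂−a₃)x̃²x³, X² = (a₃−a₁)x¹x³, X³ = (a₁−a₂)x¹x̃² act only on the second-factor variables x. Then X annihilates h₁(x̃,x) = ½(x¹)² + x²x̃² + ½(x³)², that is, X(h₁) = X¹∂h₁/∂x¹ + X²∂h₁/∂x² + X³∂h₁/∂x³ = 0. -/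
/-- The vector field `X` on `ℝ³×ℝ³` with components
`X¹ = (a₂-a₃)x̃²x³, X² = (a₃-a₁)x¹x³, X³ = (a₁-a₂)x¹x̃²` (tangent to the second
factor) annihilates `h₁(x̃,x) = ½(x¹)² + x²x̃² + ½(x³)²`:
`∑ᵢ Xⁱ ∂h₁/∂xⁱ = 0` (derivatives in the second-factor variables only). -/
theorem stmt13 (a₁ a₂ a₃ : ℝ) (xt x : Fin 3 → ℝ) :
    ∑ i : Fin 3,
      (![(a₂ - a₃) * xt 1 * x 2, (a₃ - a₁) * x 0 * x 2,
          (a₁ - a₂) * x 0 * xt 1] : Fin 3 → ℝ) i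
        * fderiv ℝ (fun y : Fin 3 → ℝ =>
            (1/2) * (y 0)^2 + y 1 * xt 1 + (1/2) * (y 2)^2) x (Pi.single i 1) = 0 := by
  have h0 : HasFDerivAt (fun y : Fin 3 → ℝ => y 0)
      (ContinuousLinearMap.proj 0 : (Fin 3 → ℝ) →L[ℝ] ℝ) x :=
    (hasFDerivAt_apply 0 x)
  have h1 : HasFDerivAt (fun y : Fin 3 → ℝ => y 1)
      (ContinuousLinearMap.proj 1 : (Fin 3 → ℝ) →L[ℝ] ℝ) x :=
    (hasFDerivAt_apply 1 x)
  have h2 : HasFDerivAt (fun y : Fin 3 → ℝ => y 2)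
      (ContinuousLinearMap.proj 2 : (Fin 3 → ℝ) →L[ℝ] ℝ) x :=
    (hasFDerivAt_apply 2 x)
  have hf : HasFDerivAt (fun y : Fin 3 → ℝ =>
      (1/2) * (y 0 * y 0) + y 1 * xt 1 + (1/2) * (y 2 * y 2))
      ((1/2 : ℝ) • (x 0 • (ContinuousLinearMap.proj 0 : (Fin 3 → ℝ) →L[ℝ] ℝ)
          + x 0 • (ContinuousLinearMap.proj 0 : (Fin 3 → ℝ) →L[ℝ] ℝ))
        + (xt 1) • (ContinuousLinearMap.proj 1 : (Fin 3 → ℝ) →L[ℝ] ℝ)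
        + (1/2 : ℝ) • (x 2 • (ContinuousLinearMap.proj 2 : (Fin 3 → ℝ) →L[ℝ] ℝ)
          + x 2 • (ContinuousLinearMap.proj 2 : (Fin 3 → ℝ) →L[ℝ] ℝ))) x :=
    (((h0.mul h0).const_mul (1/2)).add (h1.mul_const (xt 1))).add
      ((h2.mul h2).const_mul (1/2))
  simp only [pow_two]
  rw [hf.fderiv]
  simp [Fin.sum_univ_three, Pi.single_apply]
  ring
end

section
/- For the rigid body with time delay in all directions, ẋ¹(t) = a₂x²(t)x³(t−τ) − a₃x³(t)x²(t−τ), ẋ²(t) = a₃x³(t)x¹(t−τ) − a₁x¹(t)x³(t−τ), ẋ³(t) = a₁x¹(t)x²(t−τ) − a₂x²(t)x¹(t−τ), the function h₂(x) = ½(a₁(x¹)² + a₂(x²)² + a₃(x³)²) is a first integral: d/dt h₂(x(t)) = 0 for every differentiable solution x : ℝ → ℝ³ and τ ≥ 0. -/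
/-! Along a solution, `ẋ(t) = A x(t) × x(t - τ)` with `A = diag(a₁, a₂, a₃)`, while the gradient
of `h₂` is `A x`. Hence `d/dt h₂(x(t)) = ⟨A x(t), A x(t) × x(t - τ)⟩`, a triple product with a
repeated factor, which vanishes whatever the delayed state is. -/

theorem dot_self_cross_eq_zero {R : Type*} [CommRing R] (u₁ u₂ u₃ y₁ y₂ y₃ : R) :
    u₁ * (u₂ * y₃ - u₃ * y₂) + u₂ * (u₃ * y₁ - u₁ * y₃) + u₃ * (u₁ * y₂ - u₂ * y₁) = 0 := by
  ring

theorem HasDerivAt.half_weighted_sq_sum {x₁ x₂ x₃ : ℝ → ℝ} {v₁ v₂ v₃ t : ℝ} (a₁ a₂ a₃ : ℝ)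
    (h₁ : HasDerivAt x₁ v₁ t) (h₂ : HasDerivAt x₂ v₂ t) (h₃ : HasDerivAt x₃ v₃ t) :
    HasDerivAt (fun t => (1/2) * (a₁ * (x₁ t)^2 + a₂ * (x₂ t)^2 + a₃ * (x₃ t)^2))
      (a₁ * x₁ t * v₁ + a₂ * x₂ t * v₂ + a₃ * x₃ t * v₃) t := by
  refine ((((h₁.fun_pow 2).const_mul a₁).fun_add ((h₂.fun_pow 2).const_mul a₂)).fun_add
    ((h₃.fun_pow 2).const_mul a₃)).const_mul (1/2 : ℝ) |>.congr_deriv ?_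
  push_cast
  ring

theorem stmt15_general (a₁ a₂ a₃ τ : ℝ) (x₁ x₂ x₃ : ℝ → ℝ)
    (hx₁ : ∀ t, HasDerivAt x₁ (a₂ * x₂ t * x₃ (t - τ) - a₃ * x₃ t * x₂ (t - τ)) t)
    (hx₂ : ∀ t, HasDerivAt x₂ (a₃ * x₃ t * x₁ (t - τ) - a₁ * x₁ t * x₃ (t - τ)) t)
    (hx₃ : ∀ t, HasDerivAt x₃ (a₁ * x₁ t * x₂ (t - τ) - a₂ * x₂ t * x₁ (t - τ)) t) :
    ∀ t, HasDerivAt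
      (fun t => (1/2) * (a₁ * (x₁ t)^2 + a₂ * (x₂ t)^2 + a₃ * (x₃ t)^2)) 0 t := by
  intro t
  have h := (hx₁ t).half_weighted_sq_sum a₁ a₂ a₃ (hx₂ t) (hx₃ t)
  rwa [dot_self_cross_eq_zero] at h

/-- For the rigid body with time delay in all directions,
`ẋ¹(t) = a₂x²(t)x³(t-τ) - a₃x³(t)x²(t-τ)`,
`ẋ²(t) = a₃x³(t)x¹(t-τ) - a₁x¹(t)x³(t-τ)`,
`ẋ³(t) = a₁x¹(t)x²(t-τ) - a₂x²(t)x¹(t-τ)`,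
the function `h₂(x) = ½(a₁(x¹)² + a₂(x²)² + a₃(x³)²)` is a first integral. -/
theorem stmt15 (a₁ a₂ a₃ τ : ℝ) (hτ : 0 ≤ τ) (x₁ x₂ x₃ : ℝ → ℝ)
    (hx₁ : ∀ t, HasDerivAt x₁ (a₂ * x₂ t * x₃ (t - τ) - a₃ * x₃ t * x₂ (t - τ)) t)
    (hx₂ : ∀ t, HasDerivAt x₂ (a₃ * x₃ t * x₁ (t - τ) - a₁ * x₁ t * x₃ (t - τ)) t)
    (hx₃ : ∀ t, HasDerivAt x₃ (a₁ * x₁ t * x₂ (t - τ) - a₂ * x₂ t * x₁ (t - τ)) t) :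
    ∀ t, HasDerivAt
      (fun t => (1/2) * (a₁ * (x₁ t)^2 + a₂ * (x₂ t)^2 + a₃ * (x₃ t)^2)) 0 t :=
  stmt15_general a₁ a₂ a₃ τ x₁ x₂ x₃ hx₁ hx₂ hx₃
end
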